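/- arXiv:1803.04409 — 7 statements merged into one kernel-verified Lean document; each statement's English description precedes it below -/
import Mathlib

section
/- For all p, q ∈ ℕ, the filtration satisfies ⁅𝔇^{(p)}, 𝔇^{(q)}⁆ ⊆ 𝔇^{(p+q)}: if X ∈ 𝔇^{(p)} and Y ∈ 𝔇^{(q)}, then ⁅X, Y⁆ ∈ 𝔇^{(p+q)}. -/
/-- The ascending filtration `𝔇^{(q)}` of Lie–Bäcklund type associated with a Lie
subalgebra `D` of `L`: `𝔇^{(-1)} = D` (encoded as the base of the recursion) and
`𝔇^{(q)} = {X ∈ L | ⁅Y, X⁆ ∈ 𝔇^{(q-1)} for all Y ∈ D}`. Here `LBfilt D q` is `𝔇^{(q)}`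
for `q ∈ ℕ`. -/
def LBfilt {R : Type*} [CommRing R] {L : Type*} [LieRing L] [LieAlgebra R L]
    (D : LieSubalgebra R L) : ℕ → Set L
  | 0 => {X : L | ∀ Y ∈ D, ⁅Y, X⁆ ∈ D}
  | (q + 1) => {X : L | ∀ Y ∈ D, ⁅Y, X⁆ ∈ LBfilt D q}

/-!
Regard `L` as a Lie module over `D`. Then `𝔇^{(q)}` is the term `q + 1` of the upper central
series of the `D`-submodule `D ⊆ L`, so each `𝔇^{(q)}` is a submodule. For `Z ∈ D` the map
`ad Z` is a derivation of `L` lowering the index by one, so the Leibniz rule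
`⁅Z, ⁅X, Y⁆⁆ = ⁅⁅Z, X⁆, Y⁆ + ⁅X, ⁅Z, Y⁆⁆` gives the claim by induction on `p` and `q`.
-/

namespace LieSubalgebra

variable {R L : Type*} [CommRing R] [LieRing L] [LieAlgebra R L] (H : LieSubalgebra R L)

theorem mem_ucs_toLieSubmodule_succ {k : ℕ} {x : L} :
    x ∈ H.toLieSubmodule.ucs (k + 1) ↔ ∀ y ∈ H, ⁅y, x⁆ ∈ H.toLieSubmodule.ucs k := by
  rw [LieSubmodule.ucs_succ, LieSubmodule.mem_normalizer, Subtype.forall]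
  rfl

/-- At `a = b = 0` the truncated index `a + b - 1` is `0`: this case says `⁅H, H⁆ ⊆ H`. -/
theorem lie_mem_ucs_toLieSubmodule {a b : ℕ} {x y : L} (hx : x ∈ H.toLieSubmodule.ucs a)
    (hy : y ∈ H.toLieSubmodule.ucs b) : ⁅x, y⁆ ∈ H.toLieSubmodule.ucs (a + b - 1) := by
  induction a generalizing b x y with
  | zero =>
    cases b with
    | zero => exact H.lie_mem hx hy
    | succ b => simpa using (H.mem_ucs_toLieSubmodule_succ.mp hy) x hx
  | succ a iha =>
    induction b generalizing y with
    | zero =>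
      rw [← lie_skew, neg_mem_iff]
      simpa using (H.mem_ucs_toLieSubmodule_succ.mp hx) y hy
    | succ b ihb =>
      rw [show a + 1 + (b + 1) - 1 = a + b + 1 by omega, mem_ucs_toLieSubmodule_succ]
      intro z hz
      have hzx : ⁅⁅z, x⁆, y⁆ ∈ H.toLieSubmodule.ucs (a + b) := by
        simpa [Nat.add_right_comm] using iha ((H.mem_ucs_toLieSubmodule_succ.mp hx) z hz) hy
      have hzy : ⁅x, ⁅z, y⁆⁆ ∈ H.toLieSubmodule.ucs (a + b) := by
        simpa [Nat.add_right_comm] using ihb ((H.mem_ucs_toLieSubmodule_succ.mp hy) z hz)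
      rw [leibniz_lie]
      exact add_mem hzx hzy

end LieSubalgebra

theorem LBfilt_eq_ucs {R L : Type*} [CommRing R] [LieRing L] [LieAlgebra R L]
    (D : LieSubalgebra R L) (q : ℕ) : LBfilt D q = D.toLieSubmodule.ucs (q + 1) := by
  ext X
  rw [SetLike.mem_coe, D.mem_ucs_toLieSubmodule_succ]
  induction q generalizing X with
  | zero => rfl
  | succ q ih => exact forall₂_congr fun Y _ ↦ (ih _).trans D.mem_ucs_toLieSubmodule_succ.symm

/-- For all `p q ∈ ℕ`, `⁅𝔇^{(p)}, 𝔇^{(q)}⁆ ⊆ 𝔇^{(p+q)}`. -/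
theorem LBfilt_bracket_mem {R : Type*} [CommRing R] {L : Type*} [LieRing L] [LieAlgebra R L]
    (D : LieSubalgebra R L) :
    ∀ p q : ℕ, ∀ X ∈ LBfilt D p, ∀ Y ∈ LBfilt D q, ⁅X, Y⁆ ∈ LBfilt D (p + q) := by
  intro p q X hX Y hY
  rw [LBfilt_eq_ucs] at hX hY ⊢
  have h := D.lie_mem_ucs_toLieSubmodule hX hY
  rwa [show p + 1 + (q + 1) - 1 = p + q + 1 by omega] at h
end

section
/- Let ω ∈ Ω^r be p-Cartan with 1 ≤ p ≤ r. Then: (a) for every X ∈ 𝔇, the interior product i_X ω is a (p−1)-Cartan form in Ω^{r−1} and the Lie derivative L_X ω is a (p−1)-Cartan form in Ω^r; (b) if moreover X ∈ 𝒟, then i_X ω is a p-Cartan form in Ω^{r−1}. -/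
/-- The raw Cartan formula for the exterior differential: for an `r`-argument map
`ω : 𝔇^r → A` on the derivations `𝔇 = Der_𝔽(A)`, `cartanD ω : 𝔇^{r+1} → A` is
`dω(X_0,…,X_r) = (r+1)⁻¹ ( Σ_s (−1)^s X_s (ω(X_0,…,X̂_s,…,X_r))
  + Σ_{s<t} (−1)^{s+t} ω(⁅X_s,X_t⁆, X_0,…,X̂_s,…,X̂_t,…,X_r) )`. -/
noncomputable def cartanD {𝔽 : Type*} [Field 𝔽] [CharZero 𝔽]
    {A : Type*} [CommRing A] [Algebra 𝔽 A] {r : ℕ}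
    (ω : (Fin r → Derivation 𝔽 A A) → A) :
    (Fin (r + 1) → Derivation 𝔽 A A) → A :=
  fun X =>
    ((r + 1 : 𝔽))⁻¹ • (
      (∑ s : Fin (r + 1), (-1 : A) ^ (s : ℕ) * X s (ω (s.removeNth X))) +
      ∑ s : Fin (r + 1), ∑ t : Fin (r + 1),
        if s < t then
          (-1 : A) ^ ((s : ℕ) + (t : ℕ)) *
            ω (fun u : Fin r =>
              if (u : ℕ) = 0 then ⁅X s, X t⁆
              else X ⟨if (u : ℕ) - 1 < (s : ℕ) then (u : ℕ) - 1
                      else if (u : ℕ) < (t : ℕ) then (u : ℕ) else (u : ℕ) + 1,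
                      by have h1 := u.isLt; split
                         · omega
                         · split <;> omega⟩)
        else 0)

/-- The interior product `i_X ω (X_1,…,X_{r-1}) = r · ω(X, X_1,…,X_{r-1})` (raw form). -/
def iProdRaw {𝔽 : Type*} [Field 𝔽] [CharZero 𝔽]
    {A : Type*} [CommRing A] [Algebra 𝔽 A] {r : ℕ}
    (X : Derivation 𝔽 A A) (ω : (Fin r → Derivation 𝔽 A A) → A) :
    (Fin (r - 1) → Derivation 𝔽 A A) → A :=
  fun Y => (r : A) * ω (fun u => if h : (u : ℕ) = 0 then X
    else Y ⟨(u : ℕ) - 1, by have h1 := u.isLt; omega⟩)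

/-- The Lie derivative
`L_X ω (X_1,…,X_r) = X (ω (X_1,…,X_r)) − Σ_s ω(X_1,…,⁅X,X_s⁆,…,X_r)` (raw form). -/
def lieDerivRaw {𝔽 : Type*} [Field 𝔽] [CharZero 𝔽]
    {A : Type*} [CommRing A] [Algebra 𝔽 A] {r : ℕ}
    (X : Derivation 𝔽 A A) (ω : (Fin r → Derivation 𝔽 A A) → A) :
    (Fin r → Derivation 𝔽 A A) → A :=
  fun Y => X (ω Y) - ∑ s : Fin r, ω (Function.update Y s ⁅X, Y s⁆)

/-- `ω : 𝔇^r → A` is a `p`-Cartan form (w.r.t. the Cartan subalgebra `𝒟`) if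
`ω(X_1,…,X_r) = 0` whenever at least `r - p + 1` of the arguments belong to `𝒟`. -/
def IsPCartan {𝔽 : Type*} [Field 𝔽] [CharZero 𝔽]
    {A : Type*} [CommRing A] [Algebra 𝔽 A] {r : ℕ}
    (𝒟 : Submodule A (Derivation 𝔽 A A)) (p : ℕ)
    (ω : (Fin r → Derivation 𝔽 A A) → A) : Prop :=
  ∀ (Y : Fin r → Derivation 𝔽 A A) (S : Finset (Fin r)),
    r - p + 1 ≤ S.card → (∀ s ∈ S, Y s ∈ 𝒟) → ω Y = 0

/-!
`i_X ω` is, up to the factor `r`, the alternating map `ω.curryLeft X`. `L_X ω` is `A`-multilinear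
because in each slot it is the Lie derivative `x ↦ X (ℓ x) - ℓ ⁅X, x⁆` of the `1`-form `ℓ`
obtained by freezing the other slots, minus an `A`-linear sum; it is alternating because the two
bracket terms at equal arguments cancel under the swap.

The degree statements are counting arguments: the `𝒟`-arguments of `Y` stay `𝒟`-arguments
of `X, Y` (one more if `X ∈ 𝒟`), and replacing one argument of `Y` by a bracket loses at most
one of them.
-/

open Function Finset

theorem AlternatingMap.sum_map_update_self_eq_zero_of_eq {R M N ι : Type*} [CommRing R]
    [AddCommGroup M] [Module R M] [AddCommGroup N] [Module R N] [Fintype ι] [DecidableEq ι]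
    (ω : M [⋀^ι]→ₗ[R] N) (φ : M → M) {v : ι → M} {i j : ι} (h : v i = v j) (hij : i ≠ j) :
    ∑ s, ω (update v s (φ (v s))) = 0 := by
  have hswap : update v j (φ (v j)) = update v i (φ (v i)) ∘ Equiv.swap i j := by
    rw [update_comp_equiv, Equiv.symm_swap, Equiv.swap_apply_left, Equiv.comp_swap_eq_update,
      h, update_eq_self, ← h, update_eq_self]
  rw [Fintype.sum_eq_add i j hij, hswap, ω.map_swap _ hij, add_neg_cancel]
  rintro s ⟨hsi, hsj⟩
  exact ω.map_eq_zero_of_eq _ (by rwa [update_of_ne hsi.symm, update_of_ne hsj.symm]) hij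

namespace Derivation

variable {R A : Type*} [CommRing R] [CommRing A] [Algebra R A]

theorem lie_smul_right (X Y : Derivation R A A) (c : A) :
    ⁅X, c • Y⁆ = c • ⁅X, Y⁆ + X c • Y := by
  ext a
  simp only [commutator_apply, add_apply, smul_apply, smul_eq_mul, leibniz]
  ring

def lieDerivOneForm (X : Derivation R A A) (ℓ : Derivation R A A →ₗ[A] A) :
    Derivation R A A →ₗ[A] A where
  toFun Y := X (ℓ Y) - ℓ ⁅X, Y⁆
  map_add' Y Z := by simp only [map_add, lie_add]; ring
  map_smul' c Y := by
    simp only [lie_smul_right, map_add, LinearMap.map_smul, smul_eq_mul, leibniz,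
      RingHom.id_apply]
    ring

end Derivation

section Forms

variable {𝔽 A : Type*} [Field 𝔽] [CharZero 𝔽] [CommRing A] [Algebra 𝔽 A] {r : ℕ}

theorem lieDerivRaw_update (X : Derivation 𝔽 A A)
    (ω : AlternatingMap A (Derivation 𝔽 A A) A (Fin r)) (Y : Fin r → Derivation 𝔽 A A)
    (i : Fin r) (x : Derivation 𝔽 A A) :
    lieDerivRaw X ω (update Y i x) = (X.lieDerivOneForm (ω.toLinearMap Y i) -
      ∑ s ∈ {i}ᶜ, ω.toLinearMap (update Y s ⁅X, Y s⁆) i) x := by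
  have hslot : ∀ s ∈ ({i}ᶜ : Finset (Fin r)), ω (update (update Y i x) s ⁅X, update Y i x s⁆) =
      ω (update (update Y s ⁅X, Y s⁆) i x) := fun s hs => by
    have hsi : s ≠ i := by simpa using hs
    rw [update_of_ne hsi, update_comm hsi]
  rw [lieDerivRaw, Fintype.sum_eq_add_sum_compl i, sum_congr rfl hslot]
  simp [Derivation.lieDerivOneForm, sub_sub]

def lieDerivAlternatingMap (X : Derivation 𝔽 A A)
    (ω : AlternatingMap A (Derivation 𝔽 A A) A (Fin r)) :
    AlternatingMap A (Derivation 𝔽 A A) A (Fin r) where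
  toMultilinearMap := MultilinearMap.mk' (lieDerivRaw X ω)
    (fun Y i x y => by simp only [lieDerivRaw_update, map_add])
    (fun Y i c x => by simp only [lieDerivRaw_update, map_smul])
  map_eq_zero_of_eq' Y i j h hij := by
    change lieDerivRaw X ω Y = 0
    rw [lieDerivRaw, ω.map_eq_zero_of_eq Y h hij, map_zero,
      ω.sum_map_update_self_eq_zero_of_eq _ h hij, sub_zero]

theorem iProdRaw_succ_apply {n : ℕ} (X : Derivation 𝔽 A A)
    (ω : (Fin (n + 1) → Derivation 𝔽 A A) → A) (Y : Fin n → Derivation 𝔽 A A) :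
    iProdRaw X ω Y = (n + 1 : A) * ω (Fin.cons X Y) := by
  rw [iProdRaw, Nat.cast_succ]
  congr 2
  ext u
  cases u using Fin.cases <;> simp

theorem iProdRaw_succ_eq {n : ℕ} (X : Derivation 𝔽 A A)
    (ω : AlternatingMap A (Derivation 𝔽 A A) A (Fin (n + 1))) :
    iProdRaw X ω = ⇑((n + 1 : A) • ω.curryLeft X) := by
  ext Y
  rw [iProdRaw_succ_apply]
  rfl

theorem exists_alternatingMap_eq_iProdRaw (X : Derivation 𝔽 A A)
    (ω : AlternatingMap A (Derivation 𝔽 A A) A (Fin r)) :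
    ∃ η : AlternatingMap A (Derivation 𝔽 A A) A (Fin (r - 1)), ⇑η = iProdRaw X ω := by
  cases r with
  | zero => exact ⟨0, funext fun Y => by simp [iProdRaw]⟩
  | succ n => exact ⟨_, (iProdRaw_succ_eq X ω).symm⟩

end Forms

namespace IsPCartan

variable {𝔽 A : Type*} [Field 𝔽] [CharZero 𝔽] [CommRing A] [Algebra 𝔽 A] {r p : ℕ}
  {𝒟 : Submodule A (Derivation 𝔽 A A)} {ω : (Fin r → Derivation 𝔽 A A) → A}

theorem iProdRaw_sub_one (hω : IsPCartan 𝒟 p ω) (X : Derivation 𝔽 A A) :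
    IsPCartan 𝒟 (p - 1) (iProdRaw X ω) := by
  intro Y S hS hmem
  cases r with
  | zero => simp [iProdRaw]
  | succ n =>
    have hS_le : #S ≤ n := by simpa using S.card_le_univ
    rw [iProdRaw_succ_apply, hω _ (S.map (Fin.succEmb n)) (by rw [card_map]; omega)
      (by simpa using hmem), mul_zero]

theorem iProdRaw_of_mem (hω : IsPCartan 𝒟 p ω) {X : Derivation 𝔽 A A} (hX : X ∈ 𝒟) :
    IsPCartan 𝒟 p (iProdRaw X ω) := by
  intro Y S hS hmem
  cases r with
  | zero => simp [iProdRaw]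
  | succ n =>
    rw [iProdRaw_succ_apply, hω _ (Finset.cons 0 (S.map (Fin.succEmb n)) (by simp))
      (by rw [card_cons, card_map]; omega) (by simpa [hX] using hmem), mul_zero]

theorem lieDerivRaw_sub_one (hω : IsPCartan 𝒟 p ω) (hpr : p ≤ r) (X : Derivation 𝔽 A A) :
    IsPCartan 𝒟 (p - 1) (lieDerivRaw X ω) := by
  intro Y S hS hmem
  have hS_le : #S ≤ r := by simpa using S.card_le_univ
  have hterm (s : Fin r) : ω (update Y s ⁅X, Y s⁆) = 0 := by
    have := pred_card_le_card_erase (s := S) (a := s)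
    refine hω _ (S.erase s) (by omega) fun t ht => ?_
    rw [update_of_ne (ne_of_mem_erase ht)]
    exact hmem t (mem_of_mem_erase ht)
  rw [lieDerivRaw, hω Y S (by omega) hmem, map_zero, sum_eq_zero fun s _ => hterm s, sub_zero]

end IsPCartan

theorem iProd_lieDeriv_cartan_degree_general {𝔽 : Type*} [Field 𝔽] [CharZero 𝔽]
    {A : Type*} [CommRing A] [Algebra 𝔽 A]
    (𝒟 : Submodule A (Derivation 𝔽 A A))
    (r p : ℕ) (hpr : p ≤ r)
    (ω : AlternatingMap A (Derivation 𝔽 A A) A (Fin r))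
    (hω : IsPCartan 𝒟 p (⇑ω)) :
    (∀ X : Derivation 𝔽 A A,
      ((∃ η : AlternatingMap A (Derivation 𝔽 A A) A (Fin (r - 1)),
          ⇑η = iProdRaw X (⇑ω)) ∧ IsPCartan 𝒟 (p - 1) (iProdRaw X (⇑ω))) ∧
      ((∃ η : AlternatingMap A (Derivation 𝔽 A A) A (Fin r),
          ⇑η = lieDerivRaw X (⇑ω)) ∧ IsPCartan 𝒟 (p - 1) (lieDerivRaw X (⇑ω)))) ∧
    (∀ X ∈ 𝒟, IsPCartan 𝒟 p (iProdRaw X (⇑ω))) :=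
  ⟨fun X => ⟨⟨exists_alternatingMap_eq_iProdRaw X ω, hω.iProdRaw_sub_one X⟩,
    ⟨⟨lieDerivAlternatingMap X ω, rfl⟩, hω.lieDerivRaw_sub_one hpr X⟩⟩,
    fun _ hX => hω.iProdRaw_of_mem hX⟩

/-- Let `𝒟 ⊆ 𝔇` be an `A`-submodule closed under the bracket and let
`ω ∈ Ω^r` be a `p`-Cartan form with `1 ≤ p ≤ r`. Then (a) for every `X ∈ 𝔇` the interior
product `i_X ω` is a `(p-1)`-Cartan form in `Ω^{r-1}` and the Lie derivative `L_X ω` is a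
`(p-1)`-Cartan form in `Ω^r`; (b) if moreover `X ∈ 𝒟`, then `i_X ω` is a `p`-Cartan form
in `Ω^{r-1}`. -/
theorem iProd_lieDeriv_cartan_degree {𝔽 : Type*} [Field 𝔽] [CharZero 𝔽]
    {A : Type*} [CommRing A] [Algebra 𝔽 A]
    (𝒟 : Submodule A (Derivation 𝔽 A A))
    (h𝒟 : ∀ X ∈ 𝒟, ∀ Y ∈ 𝒟, ⁅X, Y⁆ ∈ 𝒟)
    (r p : ℕ) (hp1 : 1 ≤ p) (hpr : p ≤ r)
    (ω : AlternatingMap A (Derivation 𝔽 A A) A (Fin r))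
    (hω : IsPCartan 𝒟 p (⇑ω)) :
    (∀ X : Derivation 𝔽 A A,
      ((∃ η : AlternatingMap A (Derivation 𝔽 A A) A (Fin (r - 1)),
          ⇑η = iProdRaw X (⇑ω)) ∧ IsPCartan 𝒟 (p - 1) (iProdRaw X (⇑ω))) ∧
      ((∃ η : AlternatingMap A (Derivation 𝔽 A A) A (Fin r),
          ⇑η = lieDerivRaw X (⇑ω)) ∧ IsPCartan 𝒟 (p - 1) (lieDerivRaw X (⇑ω)))) ∧
    (∀ X ∈ 𝒟, IsPCartan 𝒟 p (iProdRaw X (⇑ω))) :=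
  iProd_lieDeriv_cartan_degree_general 𝒟 r p hpr ω hω
end

section
/- The exterior differential is consistent with the Cartan filtration: if ω ∈ Ω^r is a p-Cartan form (0 ≤ p ≤ r), then dω is a p-Cartan form in Ω^{r+1}. -/
/-! If at least `r - p + 2` of `X_0,…,X_r` lie in `𝒟`, each term of `dω(X_0,…,X_r)` evaluates
`ω` on `r` arguments of which at least `r - p + 1` lie in `𝒟`. The term `X_s (ω(…,X̂_s,…))` loses only
`X_s`; the bracket term loses `X_s` and `X_t`, but when both lie in `𝒟` so does `⁅X_s, X_t⁆`,
which takes their place. -/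

open Finset

theorem Finset.card_le_card_filter_add_one {α β : Type*} [Fintype α] [DecidableEq β]
    {q : α → Prop} [DecidablePred q] (g : α → β) {S : Finset β} (e : β)
    (h : ∀ x ∈ S, x ≠ e → ∃ u, q u ∧ g u = x) : #S ≤ #{u | q u} + 1 := by
  have hsurj : Set.SurjOn g ↑(univ.filter q) ↑(S.erase e) := fun x hx => by
    obtain ⟨hxe, hxS⟩ := mem_erase.1 hx
    obtain ⟨u, hu, rfl⟩ := h x hxS hxe
    exact ⟨u, mem_filter.2 ⟨mem_univ u, hu⟩, rfl⟩
  have := pred_card_le_card_erase (s := S) (a := e)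
  have : #(S.erase e) ≤ #{u | q u} := card_le_card_of_surjOn g hsurj
  omega

/-- The position in `X_0,…,X_r` of the `u`-th argument (`u ≠ 0`) of the bracket term of
`cartanD`: the indices other than `s` and `t`, in increasing order. -/
def cartanBracketIndex {r : ℕ} (s t : Fin (r + 1)) (u : Fin r) : Fin (r + 1) :=
  ⟨if (u : ℕ) - 1 < (s : ℕ) then (u : ℕ) - 1
    else if (u : ℕ) < (t : ℕ) then (u : ℕ) else (u : ℕ) + 1,
   by have h1 := u.isLt; split
      · omega
      · split <;> omega⟩

theorem exists_cartanBracketIndex_eq {r : ℕ} {s t x : Fin (r + 1)} (hst : s < t)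
    (hxs : x ≠ s) (hxt : x ≠ t) : ∃ u : Fin r, (u : ℕ) ≠ 0 ∧ cartanBracketIndex s t u = x := by
  have hxs : (x : ℕ) ≠ s := Fin.val_ne_of_ne hxs
  have hxt : (x : ℕ) ≠ t := Fin.val_ne_of_ne hxt
  have hst : (s : ℕ) < t := hst
  have hx := x.isLt
  have ht := t.isLt
  obtain ⟨v, hv, hv0, hvx⟩ : ∃ v, ∃ _ : v < r, v ≠ 0 ∧
      (if v - 1 < (s : ℕ) then v - 1 else if v < (t : ℕ) then v else v + 1) = (x : ℕ) := by
    by_cases hxs' : (x : ℕ) < s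
    · exact ⟨x + 1, by omega, by omega, by split_ifs <;> omega⟩
    by_cases hxt' : (x : ℕ) < t
    · exact ⟨x, by omega, by omega, by split_ifs <;> omega⟩
    · exact ⟨x - 1, by omega, by omega, by split_ifs <;> omega⟩
  exact ⟨⟨v, hv⟩, hv0, Fin.ext hvx⟩

def cartanBracketArgs {L : Type*} [Bracket L L] {r : ℕ} (X : Fin (r + 1) → L)
    (s t : Fin (r + 1)) : Fin r → L :=
  fun u => if (u : ℕ) = 0 then ⁅X s, X t⁆ else X (cartanBracketIndex s t u)

section

variable {𝔽 : Type*} [Field 𝔽] [CharZero 𝔽] {A : Type*} [CommRing A] [Algebra 𝔽 A]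
  {𝒟 : Submodule A (Derivation 𝔽 A A)} {r p : ℕ} {ω : (Fin r → Derivation 𝔽 A A) → A}

theorem cartanD_apply (X : Fin (r + 1) → Derivation 𝔽 A A) :
    cartanD ω X = ((r + 1 : 𝔽))⁻¹ • (
      (∑ s : Fin (r + 1), (-1 : A) ^ (s : ℕ) * X s (ω (s.removeNth X))) +
      ∑ s : Fin (r + 1), ∑ t : Fin (r + 1),
        if s < t then (-1 : A) ^ ((s : ℕ) + (t : ℕ)) * ω (cartanBracketArgs X s t) else 0) :=
  rfl

theorem IsPCartan.apply_eq_zero_of_forall_ne {β : Type*} [DecidableEq β]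
    (hω : IsPCartan 𝒟 p ω) {Z : Fin r → Derivation 𝔽 A A} (g : Fin r → β) {S : Finset β}
    (e : β) (hcard : r - p + 2 ≤ #S) (h : ∀ x ∈ S, x ≠ e → ∃ u, Z u ∈ 𝒟 ∧ g u = x) :
    ω Z = 0 := by
  classical
  have := card_le_card_filter_add_one g e h
  exact hω Z {u | Z u ∈ 𝒟} (by omega) fun u hu => (mem_filter.1 hu).2

theorem IsPCartan.apply_removeNth_eq_zero (hω : IsPCartan 𝒟 p ω)
    {X : Fin (r + 1) → Derivation 𝔽 A A} {S : Finset (Fin (r + 1))} (hS : ∀ x ∈ S, X x ∈ 𝒟)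
    (hcard : r - p + 2 ≤ #S) (s : Fin (r + 1)) : ω (s.removeNth X) = 0 :=
  hω.apply_eq_zero_of_forall_ne s.succAbove s hcard fun x hx hxs => by
    obtain ⟨u, rfl⟩ := Fin.exists_succAbove_eq hxs
    exact ⟨u, hS _ hx, rfl⟩

theorem IsPCartan.apply_cartanBracketArgs_eq_zero (h𝒟 : ∀ X ∈ 𝒟, ∀ Y ∈ 𝒟, ⁅X, Y⁆ ∈ 𝒟)
    (hω : IsPCartan 𝒟 p ω) {X : Fin (r + 1) → Derivation 𝔽 A A} {S : Finset (Fin (r + 1))}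
    (hS : ∀ x ∈ S, X x ∈ 𝒟) (hcard : r - p + 2 ≤ #S) {s t : Fin (r + 1)} (hst : s < t) :
    ω (cartanBracketArgs X s t) = 0 := by
  classical
  have hr : 0 < r := by have := t.isLt; have : (s : ℕ) < t := hst; omega
  -- `⁅X s, X t⁆` stands in for `X s`, unless `t ∉ S`, when `s` is the argument given up
  refine hω.apply_eq_zero_of_forall_ne
    (fun u => if (u : ℕ) = 0 then s else cartanBracketIndex s t u) (if t ∈ S then t else s) hcard fun x hx hxe => ?_
  by_cases hxs : x = s
  · subst hxs
    have htS : t ∈ S := by by_contra htS; simp [htS] at hxe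
    exact ⟨⟨0, hr⟩, by simpa [cartanBracketArgs] using h𝒟 _ (hS _ hx) _ (hS _ htS), by simp⟩
  · have hxt : x ≠ t := by rintro rfl; simp [hx] at hxe
    obtain ⟨u, hu0, rfl⟩ := exists_cartanBracketIndex_eq hst hxs hxt
    exact ⟨u, by simpa [cartanBracketArgs, hu0] using hS _ hx, by simp [hu0]⟩

theorem isPCartan_cartanD (h𝒟 : ∀ X ∈ 𝒟, ∀ Y ∈ 𝒟, ⁅X, Y⁆ ∈ 𝒟) (hpr : p ≤ r)
    (hω : IsPCartan 𝒟 p ω) : IsPCartan 𝒟 p (cartanD ω) := by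
  intro X S hcard hS
  have hcard : r - p + 2 ≤ #S := by omega
  rw [cartanD_apply, sum_eq_zero fun s _ => by
      rw [hω.apply_removeNth_eq_zero hS hcard s, map_zero, mul_zero],
    zero_add, sum_eq_zero fun s _ => sum_eq_zero fun t _ => ?_, smul_zero]
  split_ifs with hst
  · rw [hω.apply_cartanBracketArgs_eq_zero h𝒟 hS hcard hst, mul_zero]
  · rfl

end

/-- The exterior differential is consistent with the Cartan filtration:
if `ω ∈ Ω^r` is a `p`-Cartan form (`0 ≤ p ≤ r`) with respect to a Cartan subalgebra
`𝒟 ⊆ 𝔇` (an `A`-submodule closed under the bracket), then `dω` is a `p`-Cartan form in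
`Ω^{r+1}`. -/
theorem cartanD_preserves_cartan_filtration {𝔽 : Type*} [Field 𝔽] [CharZero 𝔽]
    {A : Type*} [CommRing A] [Algebra 𝔽 A]
    (𝒟 : Submodule A (Derivation 𝔽 A A))
    (h𝒟 : ∀ X ∈ 𝒟, ∀ Y ∈ 𝒟, ⁅X, Y⁆ ∈ 𝒟)
    (r p : ℕ) (hpr : p ≤ r)
    (ω : AlternatingMap A (Derivation 𝔽 A A) A (Fin r))
    (hω : IsPCartan 𝒟 p (⇑ω)) :
    IsPCartan 𝒟 p (cartanD (⇑ω)) :=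
  isPCartan_cartanD h𝒟 hpr hω
end

section
/- For all multi-indices r, k ∈ I and every φ : A → M: if r ≤ k then ∇_r(ε^k_φ) = (−1)^{|r|} · ε^{k−r}_φ, and if r ≤ k fails then ∇_r(ε^k_φ) = 0. -/
/-- The covariant-derivative operator on families `ζ : A × I → M`, `I = (Fin m → ℕ)`:
`(∇_μ ζ)(α, i) = D_μ (ζ (α, i)) − ζ (α, i + e_μ)`. -/
def nab {R : Type*} [CommRing R] {M : Type*} [AddCommGroup M] [Module R M]
    {m : ℕ} {A : Type*} (D : Fin m → Module.End R M) (μ : Fin m)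
    (ζ : A × (Fin m → ℕ) → M) : A × (Fin m → ℕ) → M :=
  fun p => D μ (ζ p) - ζ (p.1, p.2 + Pi.single μ 1)

/-- Iterated composition `g_1^{j^1} ∘ … ∘ g_m^{j^m}` of a family of maps, used for
`D_j = D_1^{j^1} ∘ … ∘ D_m^{j^m}` and `∇_r = ∇_1^{r^1} ∘ … ∘ ∇_m^{r^m}`. -/
def multiIter {β : Type*} {m : ℕ} (g : Fin m → β → β) (j : Fin m → ℕ) : β → β :=
  (List.ofFn fun μ => (g μ)^[j μ]).foldr (· ∘ ·) id

/-- The basic graded families `ε^k_φ (α, i) = C(i,k) • D_{i−k} (φ α)` for `k ≤ i`,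
and `ε^k_φ (α, i) = 0` otherwise. -/
def eps {R : Type*} [CommRing R] {M : Type*} [AddCommGroup M] [Module R M]
    {m : ℕ} {A : Type*} (D : Fin m → Module.End R M) (k : Fin m → ℕ) (φ : A → M) :
    A × (Fin m → ℕ) → M :=
  fun p => if ∀ μ, k μ ≤ p.2 μ then
    (∏ μ, Nat.choose (p.2 μ) (k μ)) • multiIter (fun μ => ⇑(D μ)) (p.2 - k) (φ p.1)
  else 0

/-! The closed form `signedEps D k φ r`, i.e. `(-1)^|r| • ε^{k-r}_φ` for `r ≤ k` and `0`
otherwise, satisfies `∇_μ (signedEps r) = signedEps (r + e_μ)`: this is Pascal's rule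
`C(i + e_μ, k) = C(i, k) + C(i, k - e_μ)` together with `D_μ ∘ D_j = D_{j + e_μ}`, which is where
commutativity of the `D_μ` enters. So `signedEps` semiconjugates each translation `· + e_μ` to
`∇_μ`, hence the translation `· + r` to `∇_r`, and evaluating at `0` gives the theorem. -/

section MultiIter

variable {β : Type*}

lemma multiIter_succ {m : ℕ} (g : Fin (m + 1) → β → β) (j : Fin (m + 1) → ℕ) :
    multiIter g j = (g 0)^[j 0] ∘ multiIter (fun μ => g μ.succ) (fun μ => j μ.succ) := by
  rw [multiIter, List.ofFn_succ]
  rfl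

lemma semiconj_multiIter {γ : Type*} {m : ℕ} {f : β → γ} {ga : Fin m → β → β}
    {gb : Fin m → γ → γ} (h : ∀ μ, Function.Semiconj f (ga μ) (gb μ)) (j : Fin m → ℕ) :
    Function.Semiconj f (multiIter ga j) (multiIter gb j) := by
  induction m with
  | zero => exact Function.Semiconj.id_right
  | succ m ih =>
    rw [multiIter_succ, multiIter_succ]
    exact ((h 0).iterate_right _).comp_right (ih (fun μ => h μ.succ) _)

lemma multiIter_add_right {κ : Type*} [AddCommMonoid κ] {m : ℕ} (a : Fin m → κ)
    (j : Fin m → ℕ) (x : κ) :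
    multiIter (fun μ => (· + a μ)) j x = x + ∑ μ, j μ • a μ := by
  induction m generalizing x with
  | zero => simp [multiIter]
  | succ m ih =>
    rw [multiIter_succ, Function.comp_apply, ih, add_right_iterate_apply, Fin.sum_univ_succ]
    abel

lemma multiIter_add_single {m : ℕ} {g : Fin m → β → β}
    (hg : ∀ μ ν, Function.Commute (g μ) (g ν)) (j : Fin m → ℕ) (μ : Fin m) :
    multiIter g (j + Pi.single μ 1) = g μ ∘ multiIter g j := by
  induction m with
  | zero => exact μ.elim0
  | succ m ih =>
    rw [multiIter_succ, multiIter_succ]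
    cases μ using Fin.cases with
    | zero =>
      simp [Function.iterate_succ', -Function.iterate_succ, Function.comp_assoc]
    | succ μ =>
      have htail : (fun ν : Fin m => (j + Pi.single μ.succ 1 : Fin (m + 1) → ℕ) ν.succ) =
          (fun ν => j ν.succ) + Pi.single μ 1 := by
        ext ν; simp [Pi.single_apply]
      rw [htail, ih (fun _ _ => hg _ _), Pi.add_apply,
        Pi.single_eq_of_ne (Fin.succ_ne_zero μ).symm, add_zero, ← Function.comp_assoc,
        ← ((hg μ.succ 0).iterate_right (j 0)).comp_eq, Function.comp_assoc]

end MultiIter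

lemma Pi.add_single_one_le_iff {ι : Type*} [DecidableEq ι] {r k : ι → ℕ} {μ : ι} :
    r + Pi.single μ 1 ≤ k ↔ r ≤ k ∧ r μ < k μ := by
  refine ⟨fun h => ⟨le_trans le_self_add h, by simpa using h μ⟩, fun ⟨h, hμ⟩ ν => ?_⟩
  rcases eq_or_ne ν μ with rfl | hν
  · simpa using hμ
  · simpa [Pi.single_eq_of_ne hν] using h ν

lemma Finset.prod_choose_add_single {ι : Type*} [Fintype ι] [DecidableEq ι] (i k : ι → ℕ)
    {μ : ι} (hk : k μ ≠ 0) :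
    ∏ ν, ((i + Pi.single μ 1 : ι → ℕ) ν).choose (k ν) =
      ∏ ν, (i ν).choose (k ν) + ∏ ν, (i ν).choose ((k - Pi.single μ 1 : ι → ℕ) ν) := by
  obtain ⟨t, ht⟩ := Nat.exists_eq_succ_of_ne_zero hk
  simp only [← Finset.mul_prod_erase Finset.univ _ (Finset.mem_univ μ)]
  have hrest : ∀ ν ∈ Finset.univ.erase μ, ((i + Pi.single μ 1 : ι → ℕ) ν).choose (k ν) =
      (i ν).choose (k ν) ∧
      (i ν).choose ((k - Pi.single μ 1 : ι → ℕ) ν) = (i ν).choose (k ν) := fun ν hν => by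
    simp [Pi.single_eq_of_ne (Finset.ne_of_mem_erase hν)]
  rw [Finset.prod_congr rfl fun ν hν => (hrest ν hν).1,
    Finset.prod_congr rfl fun ν hν => (hrest ν hν).2]
  simp [ht, Nat.choose_succ_succ', add_mul, add_comm]

section Eps

variable {R : Type*} [CommRing R] {M : Type*} [AddCommGroup M] [Module R M]
  {m : ℕ} {A : Type*} {D : Fin m → Module.End R M}

lemma eps_apply (k : Fin m → ℕ) (φ : A → M) (α : A) (i : Fin m → ℕ) :
    eps D k φ (α, i) =
      (∏ μ, (i μ).choose (k μ)) • multiIter (fun μ => ⇑(D μ)) (i - k) (φ α) := by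
  rw [eps, ite_eq_left_iff]
  intro h
  obtain ⟨μ, hμ⟩ := not_forall.mp h
  rw [Finset.prod_eq_zero (Finset.mem_univ μ) (Nat.choose_eq_zero_of_lt (not_le.mp hμ)),
    zero_smul]

variable (hD : ∀ μ ν : Fin m, ∀ x : M, D μ (D ν x) = D ν (D μ x))
include hD

lemma nab_eps_of_eq_zero {k : Fin m → ℕ} {μ : Fin m} (hk : k μ = 0) (φ : A → M) :
    nab D μ (eps D k φ) = 0 := by
  ext ⟨α, i⟩
  have hchoose : ∀ ν, ((i + Pi.single μ 1 : Fin m → ℕ) ν).choose (k ν) = (i ν).choose (k ν) := by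
    intro ν
    rcases eq_or_ne ν μ with rfl | hν
    · simp [hk]
    · simp [Pi.single_eq_of_ne hν]
  have hshift : i + Pi.single μ 1 - k = (i - k) + Pi.single μ 1 := by
    ext ν
    rcases eq_or_ne ν μ with rfl | hν
    · simp [hk]
    · simp [Pi.single_eq_of_ne hν]
  simp only [nab, eps_apply, hchoose, hshift, multiIter_add_single hD, Function.comp_apply,
    map_nsmul, sub_self, Pi.zero_apply]

lemma nab_eps_of_ne_zero {k : Fin m → ℕ} {μ : Fin m} (hk : k μ ≠ 0) (φ : A → M) :
    nab D μ (eps D k φ) = -eps D (k - Pi.single μ 1) φ := by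
  ext ⟨α, i⟩
  have hshift : i + Pi.single μ 1 - k = i - (k - Pi.single μ 1) := by
    ext ν
    rcases eq_or_ne ν μ with rfl | hν
    · simp; omega
    · simp [Pi.single_eq_of_ne hν]
  have hD_eps : (∏ ν, (i ν).choose (k ν)) • D μ (multiIter (fun μ => ⇑(D μ)) (i - k) (φ α)) =
      (∏ ν, (i ν).choose (k ν)) • multiIter (fun μ => ⇑(D μ)) (i - (k - Pi.single μ 1)) (φ α) := by
    by_cases hki : k ≤ i
    · have hsub : i - (k - Pi.single μ 1) = (i - k) + Pi.single μ 1 := by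
        ext ν
        rcases eq_or_ne ν μ with rfl | hν
        · have hkν := hki ν
          simp only [Pi.sub_apply, Pi.add_apply, Pi.single_eq_same]
          exact tsub_tsub_assoc hkν (Nat.one_le_iff_ne_zero.mpr hk)
        · simp [Pi.single_eq_of_ne hν]
      rw [hsub, multiIter_add_single hD, Function.comp_apply]
    · obtain ⟨ν, hν⟩ := not_forall.mp hki
      rw [Finset.prod_eq_zero (Finset.mem_univ ν) (Nat.choose_eq_zero_of_lt (not_le.mp hν)),
        zero_smul, zero_smul]
  simp only [nab, eps_apply, Pi.neg_apply, map_nsmul, hD_eps, hshift,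
    Finset.prod_choose_add_single i k hk, add_nsmul]
  abel

end Eps

section SignedEps

variable {R : Type*} [CommRing R] {M : Type*} [AddCommGroup M] [Module R M]
  {m : ℕ} {A : Type*}

open Classical in
noncomputable def signedEps (D : Fin m → Module.End R M) (k : Fin m → ℕ) (φ : A → M)
    (r : Fin m → ℕ) : A × (Fin m → ℕ) → M :=
  if r ≤ k then ((-1 : ℤ) ^ (∑ μ, r μ)) • eps D (k - r) φ else 0

lemma signedEps_zero (D : Fin m → Module.End R M) (k : Fin m → ℕ) (φ : A → M) :
    signedEps D k φ 0 = eps D k φ := by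
  simp [signedEps]

lemma nab_zsmul (D : Fin m → Module.End R M) (μ : Fin m) (c : ℤ) (ζ : A × (Fin m → ℕ) → M) :
    nab D μ (c • ζ) = c • nab D μ ζ := by
  ext p
  simp [nab, smul_sub]

lemma nab_signedEps {D : Fin m → Module.End R M}
    (hD : ∀ μ ν : Fin m, ∀ x : M, D μ (D ν x) = D ν (D μ x))
    (k : Fin m → ℕ) (φ : A → M) (r : Fin m → ℕ) (μ : Fin m) :
    nab D μ (signedEps D k φ r) = signedEps D k φ (r + Pi.single μ 1) := by
  unfold signedEps
  by_cases hr : r ≤ k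
  · rw [if_pos hr, nab_zsmul]
    by_cases hrμ : r μ < k μ
    · have hsum : ∑ ν, (r + Pi.single μ 1 : Fin m → ℕ) ν = ∑ ν, r ν + 1 := by
        simp [Finset.sum_add_distrib]
      rw [if_pos (Pi.add_single_one_le_iff.mpr ⟨hr, hrμ⟩),
        nab_eps_of_ne_zero hD (by simp; omega), smul_neg, tsub_tsub, hsum, pow_succ,
        mul_neg_one, neg_smul]
    · rw [if_neg (fun h => hrμ (Pi.add_single_one_le_iff.mp h).2),
        nab_eps_of_eq_zero hD (by simp; omega), smul_zero]
  · rw [if_neg hr, if_neg (fun h => hr (le_trans le_self_add h))]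
    ext p
    simp [nab]

end SignedEps

/-- For all multi-indices `r, k` and every `φ : A → M`: if `r ≤ k` then
`∇_r (ε^k_φ) = (−1)^{|r|} • ε^{k−r}_φ`, and if `r ≤ k` fails then `∇_r (ε^k_φ) = 0`. -/
theorem nab_eps {R : Type*} [CommRing R] {M : Type*} [AddCommGroup M] [Module R M]
    {m : ℕ} {A : Type*} (D : Fin m → Module.End R M)
    (hD : ∀ μ ν : Fin m, ∀ x : M, D μ (D ν x) = D ν (D μ x))
    (r k : Fin m → ℕ) (φ : A → M) :
    (r ≤ k → ∀ p : A × (Fin m → ℕ),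
      multiIter (fun μ => nab D μ) r (eps D k φ) p =
        ((-1 : ℤ) ^ (∑ μ, r μ)) • eps D (k - r) φ p) ∧
    (¬ r ≤ k → ∀ p : A × (Fin m → ℕ),
      multiIter (fun μ => nab D μ) r (eps D k φ) p = 0) := by
  have hshift : ∀ μ, Function.Semiconj (signedEps D k φ) (· + Pi.single μ 1) (nab D μ) :=
    fun μ s => (nab_signedEps hD k φ s μ).symm
  have key := (semiconj_multiIter hshift r 0).symm
  simp only [multiIter_add_right, zero_add, signedEps_zero, ← Pi.single_smul', smul_eq_mul,
    mul_one, Finset.univ_sum_single] at key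
  refine ⟨fun hrk p => ?_, fun hrk p => ?_⟩
  · rw [key, signedEps, if_pos hrk, Pi.smul_apply]
  · rw [key, signedEps, if_neg hrk, Pi.zero_apply]
end

section
/- Every family ζ : A × I → M admits the graded representation ζ = Σ_{k ∈ I} ε^k_{φ_k}: defining φ_k : A → M by φ_k(α) = Σ_{i + j = k} (−1)^{|j|} · C(k, i) • D_j(ζ(α, i)) (sum over pairs i, j ∈ I with i + j = k), one has, for all α ∈ A and i ∈ I, ζ(α, i) = Σ_{k ≤ i} C(i, k) • D_{i−k}(φ_k(α)) (a finite sum over multi-indices k ≤ i). -/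
/-!
Substituting `φ_k`, composing `D_{i-k} ∘ D_{k-q} = D_{i-q}` (the `D_μ` commute) and exchanging
the two sums, the coefficient of `D_{i-q} (ζ (α, q))` becomes
`Σ_{q ≤ k ≤ i} C(i,k) (-1)^{|k-q|} C(k,q)`. This factors over the coordinates, and in one
coordinate `C(n,k) C(k,q) = C(n,q) C(n-q,k-q)` reduces it to `C(n,q) Σ_t (-1)^t C(n-q,t)`, which
is `1` if `q = n` and `0` otherwise.
-/

open Finset

theorem Int.sum_Icc_choose_mul_neg_one_pow_mul_choose {q n : ℕ} (h : q ≤ n) :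
    ∑ k ∈ Icc q n, (n.choose k : ℤ) * (-1) ^ (k - q) * k.choose q = if n = q then 1 else 0 := by
  have hterm : ∀ t ∈ Finset.range (n - q + 1),
      (n.choose (q + t) : ℤ) * (-1) ^ (q + t - q) * (q + t).choose q =
        n.choose q * ((-1) ^ t * (n - q).choose t) := by
    intro t _
    have hchoose := congrArg (Nat.cast (R := ℤ)) (Nat.choose_mul (n := n) (Nat.le_add_right q t))
    push_cast at hchoose
    rw [Nat.add_sub_cancel_left] at hchoose ⊢
    linear_combination (-1 : ℤ) ^ t * hchoose
  rw [← Ico_add_one_right_eq_Icc, sum_Ico_eq_sum_range, Nat.sub_add_comm h, sum_congr rfl hterm,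
    ← mul_sum, Int.alternating_sum_range_choose]
  rcases h.eq_or_lt with rfl | hlt
  · simp
  · rw [if_neg (by omega), if_neg hlt.ne', mul_zero]

theorem Int.sum_Icc_prod_choose_mul_neg_one_pow_mul_prod_choose {m : ℕ} {q i : Fin m → ℕ}
    (h : q ≤ i) :
    ∑ k ∈ Icc q i, (∏ μ, ((i μ).choose (k μ) : ℤ)) * (-1) ^ (∑ μ, (k - q) μ) *
        ∏ μ, ((k μ).choose (q μ) : ℤ) = if q = i then 1 else 0 := by
  calc _ = ∑ k ∈ Icc q i,
          ∏ μ, ((i μ).choose (k μ) : ℤ) * (-1) ^ (k μ - q μ) * (k μ).choose (q μ) := by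
        refine sum_congr rfl fun k _ => ?_
        rw [← prod_pow_eq_pow_sum, ← prod_mul_distrib, ← prod_mul_distrib]
        rfl
    _ = ∏ μ, ∑ j ∈ Icc (q μ) (i μ),
          ((i μ).choose j : ℤ) * (-1) ^ (j - q μ) * j.choose (q μ) := by
        rw [prod_univ_sum, Pi.Icc_eq]
    _ = ∏ μ, if i μ = q μ then 1 else 0 :=
        prod_congr rfl fun μ _ => sum_Icc_choose_mul_neg_one_pow_mul_choose (h μ)
    _ = if q = i then 1 else 0 := by
        simp only [prod_boole, mem_univ, true_imp_iff, funext_iff, eq_comm]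

section MultiPow

variable {N : Type*} [Monoid N] {m : ℕ}

/-- `multiPow D a` is the paper's `D_a = D_1^{a^1} ∘ … ∘ D_m^{a^m}`. -/
def multiPow (x : Fin m → N) (a : Fin m → ℕ) : N :=
  (List.ofFn fun μ => x μ ^ a μ).prod

theorem multiPow_succ (x : Fin (m + 1) → N) (a : Fin (m + 1) → ℕ) :
    multiPow x a = x 0 ^ a 0 * multiPow (fun μ => x μ.succ) (fun μ => a μ.succ) := by
  simp [multiPow, List.ofFn_succ]

@[simp]
theorem multiPow_zero (x : Fin m → N) : multiPow x 0 = 1 := by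
  simp [multiPow]

theorem multiPow_add {x : Fin m → N} (hx : ∀ μ ν, Commute (x μ) (x ν)) (a b : Fin m → ℕ) :
    multiPow x (a + b) = multiPow x a * multiPow x b := by
  induction m with
  | zero => simp [multiPow]
  | succ m ih =>
    have hcomm : Commute (x 0 ^ b 0) (multiPow (fun μ => x μ.succ) (fun μ => a μ.succ)) :=
      Commute.list_prod_right _ _ <| by
        simp only [List.mem_ofFn, forall_exists_index]
        rintro _ μ rfl
        exact (hx 0 μ.succ).pow_pow _ _
    have htail := ih (fun μ ν => hx μ.succ ν.succ) (fun μ => a μ.succ) (fun μ => b μ.succ)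
    rw [Pi.add_def] at htail
    simp only [multiPow_succ, Pi.add_apply, pow_add, htail]
    rw [mul_assoc, hcomm.left_comm, mul_assoc]

end MultiPow

theorem multiIter_coe_eq_multiPow {R M : Type*} [Semiring R] [AddCommMonoid M] [Module R M]
    {m : ℕ} (D : Fin m → Module.End R M) (a : Fin m → ℕ) :
    multiIter (fun μ => ⇑(D μ)) a = ⇑(multiPow D a) := by
  induction m with
  | zero => rfl
  | succ m ih =>
    rw [multiPow_succ, Module.End.coe_mul, Module.End.coe_pow, ← ih]
    simp [multiIter, List.ofFn_succ]

section GradedRepresentation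

variable {R M : Type*} [Semiring R] [AddCommGroup M] [Module R M] {m : ℕ}

/-- The paper's `φ_k`, with the pairs `i + j = k` indexed by `q = i ≤ k`. -/
def gradedCoeff (D : Fin m → Module.End R M) (f : (Fin m → ℕ) → M) (k : Fin m → ℕ) : M :=
  ∑ q ∈ Iic k, ((-1 : ℤ) ^ (∑ μ, (k - q) μ)) •
    ((∏ μ, (k μ).choose (q μ)) • multiPow D (k - q) (f q))

theorem choose_smul_multiPow_gradedCoeff {D : Fin m → Module.End R M}
    (hD : ∀ μ ν, Commute (D μ) (D ν)) (f : (Fin m → ℕ) → M) {i k : Fin m → ℕ} (hk : k ≤ i) :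
    (∏ μ, (i μ).choose (k μ)) • multiPow D (i - k) (gradedCoeff D f k) =
      ∑ q ∈ Iic k, ((∏ μ, ((i μ).choose (k μ) : ℤ)) * (-1) ^ (∑ μ, (k - q) μ) *
        ∏ μ, ((k μ).choose (q μ) : ℤ)) • multiPow D (i - q) (f q) := by
  rw [gradedCoeff, map_sum, smul_sum]
  refine sum_congr rfl fun q hq => ?_
  have hpow : multiPow D (i - k) (multiPow D (k - q) (f q)) = multiPow D (i - q) (f q) := by
    rw [← Module.End.mul_apply, ← multiPow_add hD, tsub_add_tsub_cancel hk (mem_Iic.mp hq)]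
  rw [map_zsmul, map_nsmul, hpow, ← natCast_zsmul, ← natCast_zsmul, smul_smul, smul_smul]
  push_cast
  ring_nf

theorem sum_Iic_choose_smul_multiPow_gradedCoeff {D : Fin m → Module.End R M}
    (hD : ∀ μ ν, Commute (D μ) (D ν)) (f : (Fin m → ℕ) → M) (i : Fin m → ℕ) :
    ∑ k ∈ Iic i, (∏ μ, (i μ).choose (k μ)) • multiPow D (i - k) (gradedCoeff D f k) = f i := by
  have hswap : ∀ k q : Fin m → ℕ, k ∈ Iic i ∧ q ∈ Iic k ↔ k ∈ Icc q i ∧ q ∈ Iic i := by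
    simp only [mem_Iic, mem_Icc]
    exact fun k q => ⟨fun ⟨hki, hqk⟩ => ⟨⟨hqk, hki⟩, hqk.trans hki⟩,
      fun ⟨⟨hqk, hki⟩, _⟩ => ⟨hki, hqk⟩⟩
  rw [sum_congr rfl fun k hk => choose_smul_multiPow_gradedCoeff hD f (mem_Iic.mp hk),
    sum_comm' hswap]
  simp_rw [← sum_smul]
  rw [sum_congr rfl fun q hq =>
    congrArg (· • _) (Int.sum_Icc_prod_choose_mul_neg_one_pow_mul_prod_choose (mem_Iic.mp hq))]
  simp [ite_smul]

end GradedRepresentation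

/-- Every family `ζ : A × I → M` admits the graded representation
`ζ = Σ_{k ∈ I} ε^k_{φ_k}` with `φ_k α = Σ_{i + j = k} (−1)^{|j|} C(k,i) • D_j (ζ (α, i))`:
for all `α` and `i`, `ζ (α, i) = Σ_{k ≤ i} C(i,k) • D_{i−k} (φ_k α)` (sums over pairs
`i + j = k` are written as sums over `i ≤ k` with `j = k − i`). -/
theorem graded_representation {R : Type*} [CommRing R] {M : Type*} [AddCommGroup M]
    [Module R M] {m : ℕ} {A : Type*} (D : Fin m → Module.End R M)
    (hD : ∀ μ ν : Fin m, ∀ x : M, D μ (D ν x) = D ν (D μ x))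
    (ζ : A × (Fin m → ℕ) → M) :
    ∀ (α : A) (i : Fin m → ℕ),
      ζ (α, i) =
        ∑ k ∈ Finset.Iic i, (∏ μ, Nat.choose (i μ) (k μ)) •
          multiIter (fun μ => ⇑(D μ)) (i - k)
            (∑ q ∈ Finset.Iic k, ((-1 : ℤ) ^ (∑ μ, (k - q) μ)) •
              ((∏ μ, Nat.choose (k μ) (q μ)) •
                multiIter (fun μ => ⇑(D μ)) (k - q) (ζ (α, q)))) := by
  intro α i
  simp only [multiIter_coe_eq_multiPow]
  exact (sum_Iic_choose_smul_multiPow_gradedCoeff (fun μ ν => LinearMap.ext (hD μ ν))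
    (fun q => ζ (α, q)) i).symm
end

section
/- The total derivative is characterized by the chain rule: for every infinitely differentiable f : (Fin m → ℝ) × J_n → ℝ, every infinitely differentiable φ : (Fin m → ℝ) → (Fin a → ℝ), every μ ∈ Fin m, and every x ∈ (Fin m → ℝ), the partial derivative in the direction x^μ of the function x ↦ f(x, j^nφ(x)) equals (D_μ f)(x, j^{n+1}φ(x)). -/
/-- The finite set of multi-indices `i : Fin m → ℕ` with `|i| = Σ_μ i^μ ≤ N`. -/
def jetIdx (m N : ℕ) : Finset (Fin m → ℕ) :=
  Finset.filter (fun i => ∑ μ, i μ ≤ N) (Finset.Iic fun _ => N)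

/-- The `N`-jet space: real-valued functions on
`{(α, i) : α ∈ Fin a, i ∈ (Fin m → ℕ), |i| ≤ N}`. -/
abbrev Jet (m a N : ℕ) : Type :=
  (Fin a × {i : Fin m → ℕ // i ∈ jetIdx m N}) → ℝ

lemma jetIdx_mono {m N : ℕ} {i : Fin m → ℕ} (h : i ∈ jetIdx m N) :
    i ∈ jetIdx m (N + 1) := by
  simp only [jetIdx, Finset.mem_filter, Finset.mem_Iic, Pi.le_def] at h ⊢
  exact ⟨fun μ => (h.1 μ).trans (Nat.le_succ N), h.2.trans (Nat.le_succ N)⟩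

lemma jetIdx_add_single {m N : ℕ} {i : Fin m → ℕ} (h : i ∈ jetIdx m N) (μ : Fin m) :
    i + Pi.single μ 1 ∈ jetIdx m (N + 1) := by
  simp only [jetIdx, Finset.mem_filter, Finset.mem_Iic, Pi.le_def] at h ⊢
  have hs : ∑ ν, (Pi.single μ 1 : Fin m → ℕ) ν = 1 := by
    rw [Finset.sum_pi_single']
    simp
  have hb : ∀ ν, (Pi.single μ 1 : Fin m → ℕ) ν ≤ 1 := by
    intro ν
    rcases eq_or_ne ν μ with rfl | hne
    · simp
    · simp [Pi.single_apply, hne]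
  constructor
  · intro ν
    have h1 := h.1 ν
    have h2 := hb ν
    simp only [Pi.add_apply]
    omega
  · have hsum : ∑ ν, (i + (Pi.single μ 1 : Fin m → ℕ)) ν
        = (∑ ν, i ν) + ∑ ν, (Pi.single μ 1 : Fin m → ℕ) ν := by
      simp [Finset.sum_add_distrib]
    rw [hsum, hs]
    omega

/-- The restriction map `π_N : J_{N+1} → J_N`. -/
def jetProj {m a N : ℕ} (v : Jet m a (N + 1)) : Jet m a N :=
  fun p => v (p.1, ⟨p.2.1, jetIdx_mono p.2.2⟩)

/-- The partial derivative of `ψ : ℝ^m → ℝ` in the `μ`-th coordinate direction. -/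
noncomputable def pderivDir {m : ℕ} (μ : Fin m) (ψ : (Fin m → ℝ) → ℝ) :
    (Fin m → ℝ) → ℝ :=
  fun x => fderiv ℝ ψ x (Pi.single μ 1)

/-- The `N`-jet prolongation of `φ : ℝ^m → ℝ^a`: `j^N φ (x) (α, i) = (∂^i φ^α)(x)`. -/
noncomputable def jetProlong {m a : ℕ} (N : ℕ) (φ : (Fin m → ℝ) → (Fin a → ℝ)) :
    (Fin m → ℝ) → Jet m a N :=
  fun x p => multiIter (fun μ => pderivDir μ) p.2.1 (fun y => φ y p.1) x

/-- The total derivative `D_μ f : ℝ^m × J_{n+1} → ℝ` of `f : ℝ^m × J_n → ℝ`: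
`(D_μ f)(x, v) = (∂_{x^μ} f)(x, π_n v)
  + Σ_{α} Σ_{|i| ≤ n} v(α, i + e_μ) · (∂_{u^α_i} f)(x, π_n v)`. -/
noncomputable def totalDeriv {m a n : ℕ} (f : (Fin m → ℝ) × Jet m a n → ℝ) (μ : Fin m) :
    (Fin m → ℝ) × Jet m a (n + 1) → ℝ :=
  fun q =>
    fderiv ℝ f (q.1, jetProj q.2) (Pi.single μ 1, 0) +
      ∑ p : Fin a × {i : Fin m → ℕ // i ∈ jetIdx m n},
        q.2 (p.1, ⟨p.2.1 + Pi.single μ 1, jetIdx_add_single p.2.2 μ⟩) *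
          fderiv ℝ f (q.1, jetProj q.2) (0, Pi.single p 1)

lemma pd_contDiff {m : ℕ} (μ : Fin m) {ψ : (Fin m → ℝ) → ℝ}
    (hψ : ContDiff ℝ (⊤ : ℕ∞) ψ) : ContDiff ℝ (⊤ : ℕ∞) (pderivDir μ ψ) :=
  (hψ.fderiv_right (by simp)).clm_apply contDiff_const

lemma pd_iter_contDiff {m : ℕ} (μ : Fin m) (k : ℕ) {ψ : (Fin m → ℝ) → ℝ}
    (hψ : ContDiff ℝ (⊤ : ℕ∞) ψ) : ContDiff ℝ (⊤ : ℕ∞) ((pderivDir μ)^[k] ψ) := by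
  induction k with
  | zero => simpa using hψ
  | succ k ih => rw [Function.iterate_succ_apply']; exact pd_contDiff μ ih

noncomputable def pdFold {m : ℕ} (L : List (Fin m)) (j : Fin m → ℕ)
    (ψ : (Fin m → ℝ) → ℝ) : (Fin m → ℝ) → ℝ :=
  L.foldr (fun ν r => (pderivDir ν)^[j ν] r) ψ

lemma pdFold_contDiff {m : ℕ} (L : List (Fin m)) (j : Fin m → ℕ)
    {ψ : (Fin m → ℝ) → ℝ} (hψ : ContDiff ℝ (⊤ : ℕ∞) ψ) : ContDiff ℝ (⊤ : ℕ∞) (pdFold L j ψ) := by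
  induction L with
  | nil => exact hψ
  | cons ν L ih => exact pd_iter_contDiff ν (j ν) ih

lemma pd_comm {m : ℕ} (μ ν : Fin m) {ψ : (Fin m → ℝ) → ℝ}
    (hψ : ContDiff ℝ (⊤ : ℕ∞) ψ) :
    pderivDir μ (pderivDir ν ψ) = pderivDir ν (pderivDir μ ψ) := by
  funext x
  have hd : ∀ y, HasFDerivAt ψ (fderiv ℝ ψ y) y := fun y =>
    (hψ.differentiable (by simp) y).hasFDerivAt
  have h2 : DifferentiableAt ℝ (fderiv ℝ ψ) x :=
    ((hψ.fderiv_right (m := (⊤ : ℕ∞)) (by simp)).differentiable (by simp)) x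
  have hx : HasFDerivAt (fderiv ℝ ψ) (fderiv ℝ (fderiv ℝ ψ) x) x := h2.hasFDerivAt
  have hsymm := second_derivative_symmetric hd hx (Pi.single ν 1) (Pi.single μ 1)
  have key : ∀ v w : Fin m → ℝ,
      fderiv ℝ (fun y => fderiv ℝ ψ y v) x w = fderiv ℝ (fderiv ℝ ψ) x w v := by
    intro v w
    have h := ((ContinuousLinearMap.apply ℝ ℝ v).hasFDerivAt.comp x hx).fderiv
    calc fderiv ℝ (fun y => fderiv ℝ ψ y v) x w
        = fderiv ℝ ((ContinuousLinearMap.apply ℝ ℝ v) ∘ (fderiv ℝ ψ)) x w := rfl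
      _ = fderiv ℝ (fderiv ℝ ψ) x w v := by rw [h]; rfl
  show fderiv ℝ (fun y => fderiv ℝ ψ y (Pi.single ν 1)) x (Pi.single μ 1)
     = fderiv ℝ (fun y => fderiv ℝ ψ y (Pi.single μ 1)) x (Pi.single ν 1)
  rw [key, key, hsymm]

lemma pd_comm_iter {m : ℕ} (μ ν : Fin m) (k : ℕ) {ψ : (Fin m → ℝ) → ℝ}
    (hψ : ContDiff ℝ (⊤ : ℕ∞) ψ) :
    pderivDir μ ((pderivDir ν)^[k] ψ) = (pderivDir ν)^[k] (pderivDir μ ψ) := by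
  induction k with
  | zero => rfl
  | succ k ih =>
    rw [Function.iterate_succ_apply', pd_comm μ ν (pd_iter_contDiff ν k hψ), ih,
      Function.iterate_succ_apply']

lemma pdFold_congr {m : ℕ} (L : List (Fin m)) {j j' : Fin m → ℕ}
    (h : ∀ ν ∈ L, j ν = j' ν) (ψ : (Fin m → ℝ) → ℝ) :
    pdFold L j ψ = pdFold L j' ψ := by
  induction L with
  | nil => rfl
  | cons ν L ih =>
    show (pderivDir ν)^[j ν] (pdFold L j ψ) = (pderivDir ν)^[j' ν] (pdFold L j' ψ)
    rw [h ν (List.mem_cons_self), ih (fun ρ hρ => h ρ (List.mem_cons_of_mem ν hρ))]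

lemma pd_pdFold_comm {m : ℕ} (μ : Fin m) (L : List (Fin m)) (j : Fin m → ℕ)
    {ψ : (Fin m → ℝ) → ℝ} (hψ : ContDiff ℝ (⊤ : ℕ∞) ψ) :
    pderivDir μ (pdFold L j ψ) = pdFold L j (pderivDir μ ψ) := by
  induction L with
  | nil => rfl
  | cons ν L ih =>
    show pderivDir μ ((pderivDir ν)^[j ν] (pdFold L j ψ))
       = (pderivDir ν)^[j ν] (pdFold L j (pderivDir μ ψ))
    rw [pd_comm_iter μ ν (j ν) (pdFold_contDiff L j hψ), ih]

lemma pdFold_add_single {m : ℕ} (μ : Fin m) (L : List (Fin m)) (hnd : L.Nodup)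
    (hμ : μ ∈ L) (j : Fin m → ℕ) {ψ : (Fin m → ℝ) → ℝ} (hψ : ContDiff ℝ (⊤ : ℕ∞) ψ) :
    pderivDir μ (pdFold L j ψ) = pdFold L (j + Pi.single μ 1) ψ := by
  induction L with
  | nil => simp at hμ
  | cons ν L ih =>
    have hnd' := hnd.of_cons
    rcases eq_or_ne ν μ with rfl | hne
    · have hνL : ν ∉ L := (List.nodup_cons.mp hnd).1
      show pderivDir ν ((pderivDir ν)^[j ν] (pdFold L j ψ))
         = (pderivDir ν)^[(j + (Pi.single ν 1 : Fin m → ℕ)) ν] (pdFold L (j + Pi.single ν 1) ψ)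
      have hj : (j + (Pi.single ν 1 : Fin m → ℕ)) ν = j ν + 1 := by simp
      rw [hj, ← Function.iterate_succ_apply' (pderivDir ν) (j ν),
        pdFold_congr L (j := j + Pi.single ν 1) (j' := j)
          (fun ρ hρ => by
            have : ρ ≠ ν := fun h => hνL (h ▸ hρ)
            simp [Pi.single_apply, this]) ψ]
    · have hμL : μ ∈ L := by
        rcases List.mem_cons.mp hμ with h | h
        · exact absurd h.symm hne
        · exact h
      show pderivDir μ ((pderivDir ν)^[j ν] (pdFold L j ψ))
         = (pderivDir ν)^[(j + (Pi.single μ 1 : Fin m → ℕ)) ν] (pdFold L (j + Pi.single μ 1) ψ)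
      have hj : (j + (Pi.single μ 1 : Fin m → ℕ)) ν = j ν := by simp [Pi.single_apply, hne.symm]
      rw [hj, pd_comm_iter μ ν (j ν) (pdFold_contDiff L j hψ),
        pd_pdFold_comm μ L j hψ, ← pd_pdFold_comm μ L j hψ, ih hnd' hμL]

lemma foldr_comp_apply {β : Type*} (L : List (β → β)) (x : β) :
    (L.foldr (· ∘ ·) id) x = L.foldr (fun F r => F r) x := by
  induction L with
  | nil => rfl
  | cons F L ih => simp only [List.foldr_cons, Function.comp_apply, ih]

lemma multiIter_eq_pdFold {m : ℕ} (j : Fin m → ℕ) (ψ : (Fin m → ℝ) → ℝ) :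
    multiIter (fun ν => pderivDir ν) j ψ = pdFold (List.finRange m) j ψ := by
  show (List.ofFn fun μ => (pderivDir μ)^[j μ]).foldr (· ∘ ·) id ψ = _
  rw [foldr_comp_apply, List.ofFn_eq_map, List.foldr_map]
  rfl

lemma multiIter_contDiff {m : ℕ} (j : Fin m → ℕ) {ψ : (Fin m → ℝ) → ℝ}
    (hψ : ContDiff ℝ (⊤ : ℕ∞) ψ) : ContDiff ℝ (⊤ : ℕ∞) (multiIter (fun ν => pderivDir ν) j ψ) := by
  rw [multiIter_eq_pdFold]; exact pdFold_contDiff _ j hψ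

lemma pderivDir_multiIter {m : ℕ} (μ : Fin m) (j : Fin m → ℕ) {ψ : (Fin m → ℝ) → ℝ}
    (hψ : ContDiff ℝ (⊤ : ℕ∞) ψ) :
    pderivDir μ (multiIter (fun ν => pderivDir ν) j ψ) =
      multiIter (fun ν => pderivDir ν) (j + Pi.single μ 1) ψ := by
  rw [multiIter_eq_pdFold, multiIter_eq_pdFold]
  exact pdFold_add_single μ (List.finRange m) (List.nodup_finRange m)
    (List.mem_finRange μ) j hψ

/-- The total derivative is characterized by the chain rule: for every
infinitely differentiable `f : ℝ^m × J_n → ℝ`, every infinitely differentiable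
`φ : ℝ^m → ℝ^a`, every `μ` and every `x`, the partial derivative in the direction `x^μ`
of `x ↦ f (x, j^n φ (x))` equals `(D_μ f)(x, j^{n+1} φ (x))`. -/
theorem totalDeriv_chain_rule {m a n : ℕ} (hm : 1 ≤ m)
    (f : (Fin m → ℝ) × Jet m a n → ℝ) (hf : ContDiff ℝ (⊤ : ℕ∞) f)
    (φ : (Fin m → ℝ) → (Fin a → ℝ)) (hφ : ContDiff ℝ (⊤ : ℕ∞) φ)
    (μ : Fin m) (x : Fin m → ℝ) :
    fderiv ℝ (fun y => f (y, jetProlong n φ y)) x (Pi.single μ 1) =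
      totalDeriv f μ (x, jetProlong (n + 1) φ x) := by
  classical
  set J : (Fin m → ℝ) → Jet m a n := jetProlong n φ with hJdef
  have hcomp : ∀ p : Fin a × {i : Fin m → ℕ // i ∈ jetIdx m n},
      ContDiff ℝ (⊤ : ℕ∞) (fun y => J y p) := fun p =>
    multiIter_contDiff p.2.1 (contDiff_pi.mp hφ p.1)
  have hJc : ContDiff ℝ (⊤ : ℕ∞) J := contDiff_pi.mpr hcomp
  have hJd : DifferentiableAt ℝ J x := (hJc.differentiable (by simp)) x
  have hfd : DifferentiableAt ℝ f (x, J x) := (hf.differentiable (by simp)) _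
  have hg : HasFDerivAt (fun y => (y, J y))
      ((ContinuousLinearMap.id ℝ (Fin m → ℝ)).prod (fderiv ℝ J x)) x :=
    HasFDerivAt.prodMk (hasFDerivAt_id x) hJd.hasFDerivAt
  have hFD : fderiv ℝ (fun y => f (y, J y)) x
      = (fderiv ℝ f (x, J x)).comp
          ((ContinuousLinearMap.id ℝ (Fin m → ℝ)).prod (fderiv ℝ J x)) :=
    (hfd.hasFDerivAt.comp x hg).fderiv
  rw [hFD]
  set w : Jet m a n := fderiv ℝ J x (Pi.single μ 1) with hw
  have hwp : ∀ p : Fin a × {i : Fin m → ℕ // i ∈ jetIdx m n},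
      w p = jetProlong (n+1) φ x
        (p.1, ⟨p.2.1 + Pi.single μ 1, jetIdx_add_single p.2.2 μ⟩) := by
    intro p
    have h0 := (ContinuousLinearMap.proj (R := ℝ)
        (φ := fun _ : Fin a × {i : Fin m → ℕ // i ∈ jetIdx m n} => ℝ)
        p).hasFDerivAt.comp x hJd.hasFDerivAt
    have h1 : HasFDerivAt (fun y => J y p)
        ((ContinuousLinearMap.proj (R := ℝ) p).comp (fderiv ℝ J x)) x := h0
    have h2 : w p = fderiv ℝ (fun y => J y p) x (Pi.single μ 1) := by
      rw [h1.fderiv]; rfl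
    rw [h2]
    have h3 : fderiv ℝ (fun y => J y p) x (Pi.single μ 1)
        = pderivDir μ (fun y => J y p) x := rfl
    rw [h3]
    have h4 : (fun y => J y p)
        = multiIter (fun ν => pderivDir ν) p.2.1 (fun y => φ y p.1) := rfl
    rw [h4, pderivDir_multiIter μ p.2.1 (contDiff_pi.mp hφ p.1)]
    rfl
  show fderiv ℝ f (x, J x) (Pi.single μ 1, w) = _
  have hsplit : ((Pi.single μ 1 : Fin m → ℝ), w)
      = ((Pi.single μ 1 : Fin m → ℝ), (0 : Jet m a n)) + ((0 : Fin m → ℝ), w) := by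
    simp [Prod.ext_iff]
  rw [hsplit, map_add]
  show _ = totalDeriv f μ (x, jetProlong (n + 1) φ x)
  unfold totalDeriv
  congr 1
  have hsum : ((0 : Fin m → ℝ), w)
      = ∑ p : Fin a × {i : Fin m → ℕ // i ∈ jetIdx m n},
          (w p) • ((0 : Fin m → ℝ), (Pi.single p 1 : Jet m a n)) := by
    rw [Prod.ext_iff]
    constructor
    · rw [Prod.fst_sum]
      simp
    · rw [Prod.snd_sum]
      simp only [Prod.smul_mk]
      conv_lhs => rw [← Finset.univ_sum_single w]
      refine Finset.sum_congr rfl fun p _ => ?_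
      rw [← Pi.single_smul, smul_eq_mul, mul_one]
  rw [hsum, map_sum]
  refine Finset.sum_congr rfl fun p _ => ?_
  rw [map_smul, smul_eq_mul, hwp p]
  rfl
end

section
/- The only differential functions annihilated by all total derivatives are the constants: if f : (Fin m → ℝ) × J_n → ℝ is infinitely differentiable and D_μ f = 0 identically on (Fin m → ℝ) × J_{n+1} for every μ ∈ Fin m, then f is a constant function. -/
section Aux
variable {E : Type*} [NormedAddCommGroup E] [NormedSpace ℝ E]

/-- If a differentiable function has vanishing derivative in direction `w` everywhere,
then it is invariant under translation by `w`. -/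
lemma shift_invariant {h : E → ℝ} (hh : Differentiable ℝ h) {w : E}
    (hw : ∀ z, fderiv ℝ h z w = 0) (z : E) : h (z + w) = h z := by
  have key : ∀ t : ℝ, HasDerivAt (fun t : ℝ => h (z + t • w)) 0 t := by
    intro t
    have h1 : HasDerivAt (fun t : ℝ => z + t • w) w t := by
      simpa using ((hasDerivAt_id t).smul_const w).const_add z
    have h2 := (hh (z + t • w)).hasFDerivAt.comp_hasDerivAt t h1
    simp only [hw] at h2
    exact h2
  have hconst := is_const_of_deriv_eq_zero (f := fun t : ℝ => h (z + t • w))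
    (fun t => (key t).differentiableAt) (fun t => (key t).deriv) 1 0
  simpa using hconst

/-- If a smooth function has vanishing derivative in direction `w` everywhere, then its
(first) derivative is invariant under translation by `w`. -/
lemma fderiv_shift_invariant {h : E → ℝ} (hh : ContDiff ℝ (⊤ : ℕ∞) h) {w : E}
    (hw : ∀ z, fderiv ℝ h z w = 0) (z c : E) :
    fderiv ℝ h (z + w) c = fderiv ℝ h z c := by
  have hDf : ContDiff ℝ (⊤ : ℕ∞) (fderiv ℝ h) := hh.fderiv_right (by simp)
  have hDfdiff : Differentiable ℝ (fderiv ℝ h) := hDf.differentiable (by simp)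
  have hg : Differentiable ℝ (fun z => fderiv ℝ h z c) :=
    (ContinuousLinearMap.apply ℝ ℝ c).differentiable.comp hDfdiff
  refine shift_invariant hg ?_ z
  intro z
  have hD2 : HasFDerivAt (fderiv ℝ h) (fderiv ℝ (fderiv ℝ h) z) z :=
    (hDfdiff z).hasFDerivAt
  have hgd : HasFDerivAt (fun z => fderiv ℝ h z c)
      ((ContinuousLinearMap.apply ℝ ℝ c).comp (fderiv ℝ (fderiv ℝ h) z)) z :=
    (ContinuousLinearMap.apply ℝ ℝ c).hasFDerivAt.comp z hD2
  rw [hgd.fderiv]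
  have hsymm : fderiv ℝ (fderiv ℝ h) z w c = fderiv ℝ (fderiv ℝ h) z c w :=
    hh.contDiffAt.isSymmSndFDerivAt
      (by rw [minSmoothness_of_isRCLikeNormedField]; exact WithTop.coe_le_coe.mpr (le_top : (2 : ℕ∞) ≤ ⊤)) w c
  have hψd : HasFDerivAt (fun z => fderiv ℝ h z w)
      ((ContinuousLinearMap.apply ℝ ℝ w).comp (fderiv ℝ (fderiv ℝ h) z)) z :=
    (ContinuousLinearMap.apply ℝ ℝ w).hasFDerivAt.comp z hD2
  have hψ0 : fderiv ℝ (fun z => fderiv ℝ h z w) z = 0 := by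
    have : (fun z => fderiv ℝ h z w) = fun _ => (0 : ℝ) := funext hw
    rw [this]; exact fderiv_const_apply 0
  have hz : ((ContinuousLinearMap.apply ℝ ℝ w).comp (fderiv ℝ (fderiv ℝ h) z)) c = 0 := by
    rw [← hψd.fderiv, hψ0]; rfl
  simpa [hsymm] using hz

end Aux

lemma jetIdx_sum_le {m N : ℕ} {i : Fin m → ℕ} (h : i ∈ jetIdx m N) : ∑ μ, i μ ≤ N := by
  simp only [jetIdx, Finset.mem_filter] at h
  exact h.2

lemma sum_add_single {m : ℕ} (i : Fin m → ℕ) (μ : Fin m) :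
    ∑ ν, (i + Pi.single μ 1 : Fin m → ℕ) ν = (∑ ν, i ν) + 1 := by
  have hs : ∑ ν, (Pi.single μ 1 : Fin m → ℕ) ν = 1 := by
    rw [Finset.sum_pi_single']; simp
  simp only [Pi.add_apply, Finset.sum_add_distrib, hs]

/-- Extension of a jet by zero in the top-order coordinates. -/
noncomputable def jetExt {m a n : ℕ} (u : Jet m a n) : Jet m a (n + 1) :=
  fun p => if h : p.2.1 ∈ jetIdx m n then u (p.1, ⟨p.2.1, h⟩) else 0

lemma jetProj_jetExt {m a n : ℕ} (u : Jet m a n) : jetProj (jetExt u) = u := by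
  funext p
  simp [jetProj, jetExt, p.2.2]

lemma jetProj_add {m a n : ℕ} (v w : Jet m a (n + 1)) :
    jetProj (v + w) = jetProj v + jetProj w := rfl

lemma jetProj_single_mem {m a n : ℕ} {j : Fin m → ℕ} {α : Fin a}
    (hj : j ∈ jetIdx m (n + 1)) (hjn : j ∈ jetIdx m n) :
    jetProj (Pi.single (α, ⟨j, hj⟩) 1 : Jet m a (n + 1))
      = Pi.single (α, ⟨j, hjn⟩) 1 := by
  funext q
  simp only [jetProj, Pi.single_apply, Prod.ext_iff, Subtype.ext_iff]

lemma jetProj_single_not_mem {m a n : ℕ} {j : Fin m → ℕ} {α : Fin a}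
    (hj : j ∈ jetIdx m (n + 1)) (hjn : j ∉ jetIdx m n) :
    jetProj (Pi.single (α, ⟨j, hj⟩) 1 : Jet m a (n + 1)) = 0 := by
  funext q
  have hne : q.2.1 ≠ j := fun h => hjn (h ▸ q.2.2)
  simp only [jetProj, Pi.single_apply, Prod.ext_iff, Subtype.ext_iff]
  simp [hne]

/-- Core step: if all `u`-partials of one order higher vanish identically, then the
`u`-partial at `p` vanishes identically. -/
lemma core_step {m a n : ℕ} (hm : 1 ≤ m) {f : (Fin m → ℝ) × Jet m a n → ℝ}
    (hf : ContDiff ℝ (⊤ : ℕ∞) f)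
    (h0 : ∀ μ : Fin m, ∀ q : (Fin m → ℝ) × Jet m a (n + 1), totalDeriv f μ q = 0)
    (p : Fin a × {i : Fin m → ℕ // i ∈ jetIdx m n})
    (IH : ∀ q : Fin a × {i : Fin m → ℕ // i ∈ jetIdx m n},
      ∑ μ, (q.2.1 : Fin m → ℕ) μ = (∑ μ, (p.2.1 : Fin m → ℕ) μ) + 1 →
      ∀ z, fderiv ℝ f z (0, Pi.single q 1) = 0)
    (z : (Fin m → ℝ) × Jet m a n) :
    fderiv ℝ f z (0, Pi.single p 1) = 0 := by
  classical
  obtain ⟨x, u⟩ := z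
  set μ₀ : Fin m := ⟨0, hm⟩ with hμ₀
  have hj : p.2.1 + Pi.single μ₀ 1 ∈ jetIdx m (n + 1) := jetIdx_add_single p.2.2 μ₀
  set j : Fin m → ℕ := p.2.1 + Pi.single μ₀ 1 with hjdef
  set w : Jet m a (n + 1) := Pi.single (p.1, ⟨j, hj⟩) 1 with hwdef
  set v : Jet m a (n + 1) := jetExt u with hvdef
  have hA : ∀ c, fderiv ℝ f (x, jetProj (v + w)) c = fderiv ℝ f (x, u) c := by
    intro c
    rw [jetProj_add, hvdef, jetProj_jetExt]
    by_cases hjn : j ∈ jetIdx m n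
    · rw [hwdef, jetProj_single_mem hj hjn]
      have hIH : ∀ z, fderiv ℝ f z
          ((0 : Fin m → ℝ), (Pi.single (p.1, ⟨j, hjn⟩) 1 : Jet m a n)) = 0 :=
        IH (p.1, ⟨j, hjn⟩) (by exact sum_add_single p.2.1 μ₀)
      have hshift := fderiv_shift_invariant hf hIH (x, u) c
      simpa [Prod.mk_add_mk] using hshift
    · rw [hwdef, jetProj_single_not_mem hj hjn, add_zero]
  have E1 := h0 μ₀ (x, v + w)
  have E2 := h0 μ₀ (x, v)
  simp only [totalDeriv] at E1 E2
  simp only [hA] at E1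
  have hpv : jetProj v = u := by rw [hvdef, jetProj_jetExt]
  rw [hpv] at E2
  have E3 : ∑ q : Fin a × {i : Fin m → ℕ // i ∈ jetIdx m n},
      w (q.1, ⟨q.2.1 + Pi.single μ₀ 1, jetIdx_add_single q.2.2 μ₀⟩) *
        fderiv ℝ f (x, u) (0, Pi.single q 1) = 0 := by
    have hsub : ∑ q : Fin a × {i : Fin m → ℕ // i ∈ jetIdx m n},
        (v + w) (q.1, ⟨q.2.1 + Pi.single μ₀ 1, jetIdx_add_single q.2.2 μ₀⟩) *
          fderiv ℝ f (x, u) (0, Pi.single q 1)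
        - ∑ q : Fin a × {i : Fin m → ℕ // i ∈ jetIdx m n},
        v (q.1, ⟨q.2.1 + Pi.single μ₀ 1, jetIdx_add_single q.2.2 μ₀⟩) *
          fderiv ℝ f (x, u) (0, Pi.single q 1)
        = ∑ q : Fin a × {i : Fin m → ℕ // i ∈ jetIdx m n},
        w (q.1, ⟨q.2.1 + Pi.single μ₀ 1, jetIdx_add_single q.2.2 μ₀⟩) *
          fderiv ℝ f (x, u) (0, Pi.single q 1) := by
      rw [← Finset.sum_sub_distrib]
      refine Finset.sum_congr rfl fun q _ => ?_
      simp only [Pi.add_apply]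
      ring
    linarith
  have hsum : ∑ q : Fin a × {i : Fin m → ℕ // i ∈ jetIdx m n},
      w (q.1, ⟨q.2.1 + Pi.single μ₀ 1, jetIdx_add_single q.2.2 μ₀⟩) *
        fderiv ℝ f (x, u) (0, Pi.single q 1)
      = fderiv ℝ f (x, u) (0, Pi.single p 1) := by
    rw [Finset.sum_eq_single p]
    · have : w (p.1, ⟨p.2.1 + Pi.single μ₀ 1, jetIdx_add_single p.2.2 μ₀⟩) = 1 := by
        rw [hwdef]
        simp [hjdef]
      rw [this, one_mul]
    · intro q _ hq
      have hw0 : w (q.1, ⟨q.2.1 + Pi.single μ₀ 1, jetIdx_add_single q.2.2 μ₀⟩) = 0 := by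
        rw [hwdef]
        rw [Pi.single_apply, if_neg]
        rintro h
        apply hq
        rw [Prod.ext_iff, Subtype.ext_iff] at h
        have h2 : q.2.1 = p.2.1 := by
          have h3 : q.2.1 + Pi.single μ₀ 1 = p.2.1 + Pi.single μ₀ 1 := by
            simpa [hjdef] using h.2
          exact add_right_cancel h3
        exact Prod.ext h.1 (Subtype.ext h2)
      rw [hw0, zero_mul]
    · intro hp
      exact absurd (Finset.mem_univ p) hp
  rw [hsum] at E3
  exact E3

/-- All `u`-partials of `f` vanish. -/
lemma vanish_u {m a n : ℕ} (hm : 1 ≤ m) {f : (Fin m → ℝ) × Jet m a n → ℝ}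
    (hf : ContDiff ℝ (⊤ : ℕ∞) f)
    (h0 : ∀ μ : Fin m, ∀ q : (Fin m → ℝ) × Jet m a (n + 1), totalDeriv f μ q = 0)
    (p : Fin a × {i : Fin m → ℕ // i ∈ jetIdx m n})
    (z : (Fin m → ℝ) × Jet m a n) :
    fderiv ℝ f z (0, Pi.single p 1) = 0 := by
  suffices H : ∀ d : ℕ, ∀ p : Fin a × {i : Fin m → ℕ // i ∈ jetIdx m n},
      n ≤ d + ∑ μ, (p.2.1 : Fin m → ℕ) μ →
      ∀ z, fderiv ℝ f z (0, Pi.single p 1) = 0 by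
    exact H n p (Nat.le_add_right n _) z
  intro d
  induction d with
  | zero =>
    intro p hp z
    refine core_step hm hf h0 p ?_ z
    intro q hq
    have h1 := jetIdx_sum_le q.2.2
    have h2 := jetIdx_sum_le p.2.2
    omega
  | succ d ih =>
    intro p hp z
    refine core_step hm hf h0 p ?_ z
    intro q hq
    exact ih q (by omega)

/-- The only differential functions annihilated by all total
derivatives are the constants: if `f : ℝ^m × J_n → ℝ` is infinitely differentiable and
`D_μ f = 0` identically on `ℝ^m × J_{n+1}` for every `μ`, then `f` is constant. -/
theorem constant_of_totalDeriv_eq_zero {m a n : ℕ} (hm : 1 ≤ m)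
    (f : (Fin m → ℝ) × Jet m a n → ℝ) (hf : ContDiff ℝ (⊤ : ℕ∞) f)
    (h0 : ∀ μ : Fin m, ∀ q : (Fin m → ℝ) × Jet m a (n + 1), totalDeriv f μ q = 0) :
    ∀ p q : (Fin m → ℝ) × Jet m a n, f p = f q := by
  classical
  have hu := vanish_u hm hf h0
  have hx : ∀ (μ : Fin m) (z : (Fin m → ℝ) × Jet m a n),
      fderiv ℝ f z ((Pi.single μ 1 : Fin m → ℝ), 0) = 0 := by
    rintro μ ⟨x, u⟩
    have h := h0 μ (x, jetExt u)
    simp only [totalDeriv, jetProj_jetExt] at h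
    simpa [hu] using h
  have hD : ∀ z, fderiv ℝ f z = 0 := by
    intro z
    apply ContinuousLinearMap.ext
    intro c
    have hc : c = (∑ μ : Fin m, c.1 μ • ((Pi.single μ 1 : Fin m → ℝ), (0 : Jet m a n)))
        + (∑ q : Fin a × {i : Fin m → ℕ // i ∈ jetIdx m n},
            c.2 q • ((0 : Fin m → ℝ), (Pi.single q 1 : Jet m a n))) := by
      apply Prod.ext
      · simp [Prod.fst_sum, Prod.smul_mk, ← Pi.single_smul, Finset.univ_sum_single]
      · simp [Prod.snd_sum, Prod.smul_mk, ← Pi.single_smul, Finset.univ_sum_single]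
    rw [hc]
    simp only [map_add, map_sum, map_smul, hu, hx, smul_zero, Finset.sum_const_zero,
      add_zero, ContinuousLinearMap.zero_apply]
  exact fun p q => is_const_of_fderiv_eq_zero (hf.differentiable (by simp)) hD p q
end
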